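/- Let the alphabet contain at least one letter a. The single-variable span length domination rule D_spanLen — the spanner on variables {x, x†} that on every document d captures exactly (i) the empty mapping and (ii) every mapping m with dom(m) = {x, x†} such that the length of m(x†) is at least the length of m(x) — is not a regular spanner, i.e., no sequential variable-set automaton defines it. -/

import Mathlib

namespace DocSpanners

/-- A span: a pair of endpoint positions `[i, j⟩`. -/
abbrev Span : Type := ℕ × ℕ

/-- `s` is a span of document `d`. -/
def IsSpanOf {α : Type} (d : List α) (s : Span) : Prop :=
  s.1 ≤ s.2 ∧ s.2 ≤ d.length

/-- A (schemaless) mapping over variable type `V`: a partial assignment of spans. -/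
abbrev Mapping (V : Type) : Type := V → Option Span

/-- `m` is a mapping of document `d`. -/
def MappingOf {α V : Type} (d : List α) (m : Mapping V) : Prop :=
  ∀ x s, m x = some s → IsSpanOf d s

/-- A spanner: maps documents to sets of mappings. -/
abbrev Spanner (α V : Type) : Type := List α → Set (Mapping V)

/-- Labels of a variable-set automaton: letters and variable markers. -/
inductive Label (α V : Type) : Type where
  | letter (a : α)
  | vopen (x : V)
  | vclose (x : V)
deriving DecidableEq

/-- The sequence of letters of a ref-word. -/
def letters {α V : Type} (w : List (Label α V)) : List α :=
  w.filterMap fun l => match l with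
    | Label.letter a => some a
    | _ => none

/-- A ref-word is valid if for each variable, either its markers do not appear, or
the opening and closing markers appear exactly once with the opening first. -/
def ValidRef {α V : Type} [DecidableEq α] [DecidableEq V] (w : List (Label α V)) : Prop :=
  ∀ x : V,
    (Label.vopen x ∉ w ∧ Label.vclose x ∉ w) ∨
    (w.count (Label.vopen x) = 1 ∧ w.count (Label.vclose x) = 1 ∧
      w.idxOf (Label.vopen x) < w.idxOf (Label.vclose x))

/-- The mapping defined by a (valid) ref-word: each marked variable is sent to the
span delimited by the positions at which its markers are read. -/
def refMapping {α V : Type} [DecidableEq α] [DecidableEq V] (w : List (Label α V)) :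
    Mapping V := fun x =>
  if Label.vopen x ∈ w then
    some ((letters (w.take (w.idxOf (Label.vopen x)))).length,
          (letters (w.take (w.idxOf (Label.vclose x)))).length)
  else none

/-- A variable-set automaton with state type `Q`. -/
structure VA (α V Q : Type) : Type where
  init : Q
  final : Set Q
  trans : Q → Label α V → Q → Prop

/-- Paths in a VA. -/
inductive VA.Path {α V Q : Type} (A : VA α V Q) : Q → List (Label α V) → Q → Prop where
  | nil (q : Q) : VA.Path A q [] q
  | cons {q q' q'' : Q} {l : Label α V} {w : List (Label α V)} :
      A.trans q l q' → VA.Path A q' w q'' → VA.Path A q (l :: w) q''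

/-- The VA accepts the ref-word `w` (an accepting run reads `w`). -/
def VA.AcceptsRef {α V Q : Type} (A : VA α V Q) (w : List (Label α V)) : Prop :=
  ∃ qf ∈ A.final, A.Path A.init w qf

/-- A VA is sequential if every accepting run is valid. -/
def VA.Sequential {α V Q : Type} [DecidableEq α] [DecidableEq V] (A : VA α V Q) : Prop :=
  ∀ w, A.AcceptsRef w → ValidRef w

/-- The spanner defined by a (sequential) VA. -/
def VA.spanner {α V Q : Type} [DecidableEq α] [DecidableEq V] (A : VA α V Q) :
    Spanner α V := fun d =>
  {m | ∃ w, A.AcceptsRef w ∧ letters w = d ∧ refMapping w = m}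

/-- A spanner is regular if it is defined by some sequential VA with finitely many states. -/
def IsRegular {α V : Type} [DecidableEq α] [DecidableEq V] (P : Spanner α V) : Prop :=
  ∃ (Q : Type) (_ : Fintype Q) (A : VA α V Q), A.Sequential ∧ A.spanner = P

/-- The skyline operator: keep only the mappings of `P d` that are maximal under `R d`. -/
def skyline {α V : Type} (P : Spanner α V)
    (R : List α → Mapping V → Mapping V → Prop) : Spanner α V := fun d =>
  {m | m ∈ P d ∧ ∀ m' ∈ P d, m' ≠ m → ¬ R d m m'}

/-- The variable inclusion domination relation: `m2` extends `m1`. -/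
def varIncRel {V : Type} (m1 m2 : Mapping V) : Prop :=
  ∀ x s, m1 x = some s → m2 x = some s

/-- Two mappings have the same domain. -/
def sameDom {V : Type} (m1 m2 : Mapping V) : Prop :=
  ∀ x, m1 x = none ↔ m2 x = none

/-- The span inclusion domination relation. -/
def spanIncRel {V : Type} (m1 m2 : Mapping V) : Prop :=
  sameDom m1 m2 ∧
    ∀ x s1 s2, m1 x = some s1 → m2 x = some s2 → s2.1 ≤ s1.1 ∧ s1.2 ≤ s2.2

/-- The left-to-right domination relation: same start, `m2` no shorter. -/
def ltrRel {V : Type} (m1 m2 : Mapping V) : Prop :=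
  sameDom m1 m2 ∧
    ∀ x s1 s2, m1 x = some s1 → m2 x = some s2 →
      s1.1 = s2.1 ∧ s1.2 - s1.1 ≤ s2.2 - s2.1

/-- The span length domination relation: `m2`'s spans are no shorter. -/
def spanLenRel {V : Type} (m1 m2 : Mapping V) : Prop :=
  sameDom m1 m2 ∧
    ∀ x s1 s2, m1 x = some s1 → m2 x = some s2 → s1.2 - s1.1 ≤ s2.2 - s2.1


/-- The single-variable span length domination rule, as a spanner on variables
`{x, x†}` (encoded as `Unit ⊕ Unit`, left = `x`, right = `x†`): on every document it
captures the empty mapping and every mapping assigning both variables such that the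
span of `x†` is at least as long as the span of `x`. -/
def spanLenRule (α : Type) : Spanner α (Unit ⊕ Unit) := fun d =>
  {m | (∀ y, m y = none) ∨
       (∃ s1 s2 : Span, IsSpanOf d s1 ∧ IsSpanOf d s2 ∧
          m (Sum.inl ()) = some s1 ∧ m (Sum.inr ()) = some s2 ∧
          s1.2 - s1.1 ≤ s2.2 - s2.1)}

/-! On the document `a^(2n)` with `n = |Q| + 1`, the rule captures the mapping
`x ↦ [0,n⟩, x† ↦ [n,2n⟩`, so some accepting ref-word `w` produces it. Among the cut points of
`w` placed after each of the last `n` letters, two carry the same state of the run; cutting out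
the infix between them gives another accepting ref-word. All markers except `⊣x†` lie before
the cut, so `x` still gets `[0,n⟩` and `x†` still starts at `n`, but the document now has fewer
than `2n` letters, so the span of `x†` is shorter than that of `x`. -/

section Letters

variable {α V : Type}

@[simp]
theorem letters_append (u v : List (Label α V)) : letters (u ++ v) = letters u ++ letters v :=
  List.filterMap_append

def lettersBefore (w : List (Label α V)) (i : ℕ) : ℕ :=
  (letters (w.take i)).length

theorem lettersBefore_add (w : List (Label α V)) (i j : ℕ) :
    lettersBefore w (i + j) = lettersBefore w i + lettersBefore (w.drop i) j := by
  simp [lettersBefore, List.take_add]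

theorem lettersBefore_mono (w : List (Label α V)) : Monotone (lettersBefore w) := by
  intro i j hij
  obtain ⟨k, rfl⟩ := Nat.exists_eq_add_of_le hij
  simp [lettersBefore_add]

theorem lettersBefore_succ_le (w : List (Label α V)) (i : ℕ) :
    lettersBefore w (i + 1) ≤ lettersBefore w i + 1 := by
  rw [lettersBefore_add]
  have : lettersBefore (w.drop i) 1 ≤ 1 :=
    (List.length_filterMap_le _ _).trans (by simp)
  omega

theorem lettersBefore_add_length_letters_drop (w : List (Label α V)) (i : ℕ) :
    lettersBefore w i + (letters (w.drop i)).length = (letters w).length := by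
  rw [lettersBefore, ← List.length_append, ← letters_append, List.take_append_drop]

theorem lettersBefore_le (w : List (Label α V)) (i : ℕ) :
    lettersBefore w i ≤ (letters w).length :=
  (lettersBefore_add_length_letters_drop w i).symm ▸ Nat.le_add_right _ _

theorem exists_lettersBefore_eq {w : List (Label α V)} {k : ℕ} (hk : k ≤ (letters w).length) :
    ∃ i, lettersBefore w i = k := by
  have hex : ∃ i, k ≤ lettersBefore w i := ⟨w.length, by simpa [lettersBefore] using hk⟩
  refine ⟨Nat.find hex, le_antisymm ?_ (Nat.find_spec hex)⟩
  cases h : Nat.find hex with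
  | zero => simp [lettersBefore, letters]
  | succ j =>
    have hlt := Nat.find_min hex (m := j) (by omega)
    have := lettersBefore_succ_le w j
    omega

theorem length_letters_take_append_drop_lt {w : List (Label α V)} {p p' : ℕ}
    (h : lettersBefore w p < lettersBefore w p') :
    (letters (w.take p ++ w.drop p')).length < (letters w).length := by
  have := lettersBefore_add_length_letters_drop w p'
  rw [letters_append, List.length_append]
  change lettersBefore w p + _ < _
  omega

variable [DecidableEq α] [DecidableEq V]

theorem lettersBefore_idxOf_take_append {w : List (Label α V)} {l : Label α V} {p : ℕ}
    (h : lettersBefore w (w.idxOf l) < lettersBefore w p) (v : List (Label α V)) :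
    l ∈ w.take p ∧
      lettersBefore (w.take p ++ v) ((w.take p ++ v).idxOf l) = lettersBefore w (w.idxOf l) := by
  have hp : w.idxOf l < p := (lettersBefore_mono w).reflect_lt h
  have hw : w.idxOf l < w.length := by
    by_contra! hge
    have := lettersBefore_mono w hge
    have := lettersBefore_le w p
    simp only [lettersBefore, List.take_length] at *
    omega
  have hmem : l ∈ w.take p := by
    rw [List.mem_take_iff_getElem]
    exact ⟨w.idxOf l, by omega, List.getElem_idxOf hw⟩
  have hidx : (w.take p).idxOf l = w.idxOf l := by
    conv_rhs => rw [← List.take_append_drop p w]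
    rw [List.idxOf_append_of_mem hmem]
  refine ⟨hmem, ?_⟩
  have hle : w.idxOf l ≤ (w.take p).length := by
    simp only [List.length_take, le_inf_iff]; omega
  rw [List.idxOf_append_of_mem hmem, hidx, lettersBefore, lettersBefore,
    List.take_append_of_le_length hle, List.take_take, min_eq_left hp.le]

theorem refMapping_of_mem {w : List (Label α V)} {x : V} (h : Label.vopen x ∈ w) :
    refMapping w x = some (lettersBefore w (w.idxOf (Label.vopen x)),
      lettersBefore w (w.idxOf (Label.vclose x))) := by
  simp [refMapping, h, lettersBefore]

theorem mem_of_refMapping_eq_some {w : List (Label α V)} {x : V} {s : Span}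
    (h : refMapping w x = some s) : Label.vopen x ∈ w := by
  by_contra hx
  simp [refMapping, hx] at h

theorem refMapping_snd_le {w : List (Label α V)} {x : V} {s : Span}
    (h : refMapping w x = some s) : s.2 ≤ (letters w).length := by
  rw [refMapping_of_mem (mem_of_refMapping_eq_some h)] at h
  cases h
  exact lettersBefore_le w _

theorem refMapping_take_append_fst {w : List (Label α V)} {x : V} {s : Span} {p : ℕ}
    (h : refMapping w x = some s) (h₁ : s.1 < lettersBefore w p) (v : List (Label α V)) :
    ∃ e, refMapping (w.take p ++ v) x = some (s.1, e) := by
  rw [refMapping_of_mem (mem_of_refMapping_eq_some h)] at h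
  cases h
  obtain ⟨hmem, hopen⟩ := lettersBefore_idxOf_take_append h₁ v
  exact ⟨_, by rw [refMapping_of_mem (List.mem_append_left v hmem), hopen]⟩

theorem refMapping_take_append {w : List (Label α V)} {x : V} {s : Span} {p : ℕ}
    (h : refMapping w x = some s) (h₁ : s.1 < lettersBefore w p) (h₂ : s.2 < lettersBefore w p)
    (v : List (Label α V)) : refMapping (w.take p ++ v) x = some s := by
  rw [refMapping_of_mem (mem_of_refMapping_eq_some h)] at h
  cases h
  obtain ⟨hmem, hopen⟩ := lettersBefore_idxOf_take_append h₁ v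
  rw [refMapping_of_mem (List.mem_append_left v hmem), hopen,
    (lettersBefore_idxOf_take_append h₂ v).2]

end Letters

section Paths

variable {α V Q : Type} {A : VA α V Q}

theorem VA.path_append_iff {q q'' : Q} {u v : List (Label α V)} :
    A.Path q (u ++ v) q'' ↔ ∃ q', A.Path q u q' ∧ A.Path q' v q'' := by
  induction u generalizing q with
  | nil => exact ⟨fun h => ⟨q, .nil q, h⟩, fun ⟨_, hu, hv⟩ => by cases hu; exact hv⟩
  | cons l u ih =>
    constructor
    · rintro (_ | ⟨ht, hp⟩)
      obtain ⟨q', hu, hv⟩ := ih.1 hp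
      exact ⟨q', .cons ht hu, hv⟩
    · rintro ⟨q', (_ | ⟨ht, hu⟩), hv⟩
      exact .cons ht (ih.2 ⟨q', hu, hv⟩)

theorem VA.Path.exists_cut [Fintype Q] {q q' : Q} {w : List (Label α V)}
    (hw : A.Path q w q') (m : ℕ) (hm : m + Fintype.card Q < (letters w).length) :
    ∃ p p', m < lettersBefore w p ∧ lettersBefore w p < lettersBefore w p' ∧
      A.Path q (w.take p ++ w.drop p') q' := by
  choose! pos hpos using fun k (hk : k ≤ (letters w).length) => exists_lettersBefore_eq hk
  have hsplit : ∀ i, ∃ s, A.Path q (w.take i) s ∧ A.Path s (w.drop i) q' := fun i =>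
    VA.path_append_iff.1 (by rwa [List.take_append_drop])
  choose st hst using hsplit
  set I := Finset.Ioc m (letters w).length
  obtain ⟨k₁, hk₁, k₂, hk₂, hlt, heq⟩ :
      ∃ k₁ ∈ I, ∃ k₂ ∈ I, k₁ < k₂ ∧ st (pos k₁) = st (pos k₂) := by
    obtain ⟨k₁, hk₁, k₂, hk₂, hne, heq⟩ :=
      Finset.exists_ne_map_eq_of_card_lt_of_maps_to (s := I) (t := (Finset.univ : Finset Q))
        (f := fun k => st (pos k)) (by simp only [I, Finset.card_univ, Nat.card_Ioc]; omega)
        (fun _ _ => Finset.mem_coe.2 (Finset.mem_univ _))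
    rcases hne.lt_or_gt with hlt | hlt
    exacts [⟨k₁, hk₁, k₂, hk₂, hlt, heq⟩, ⟨k₂, hk₂, k₁, hk₁, hlt, heq.symm⟩]
  rw [Finset.mem_Ioc] at hk₁ hk₂
  refine ⟨pos k₁, pos k₂, ?_, ?_, VA.path_append_iff.2 ⟨_, (hst _).1, heq ▸ (hst _).2⟩⟩
  · rw [hpos k₁ hk₁.2]; exact hk₁.1
  · rw [hpos k₁ hk₁.2, hpos k₂ hk₂.2]; exact hlt

end Paths

theorem le_of_mem_spanLenRule {α : Type} {d : List α} {m : Mapping (Unit ⊕ Unit)} {s t : Span}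
    (hm : m ∈ spanLenRule α d) (hs : m (.inl ()) = some s) (ht : m (.inr ()) = some t) :
    s.2 - s.1 ≤ t.2 - t.1 := by
  rcases hm with hnone | ⟨s', t', -, -, hs', ht', hle⟩
  · simp [hnone] at hs
  · rw [hs] at hs'; rw [ht] at ht'
    cases hs'; cases ht'
    exact hle

theorem spanLenRule_not_regular_general {α : Type} [DecidableEq α] (a : α) :
    ¬ IsRegular (spanLenRule α) := by
  rintro ⟨Q, _, A, -, hA⟩
  set n := Fintype.card Q + 1
  have hm : Sum.elim (fun _ => some (0, n)) (fun _ => some (n, 2 * n)) ∈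
      A.spanner (List.replicate (2 * n) a) := by
    rw [hA]
    refine Or.inr ⟨(0, n), (n, 2 * n), ?_, ?_, rfl, rfl, ?_⟩ <;> simp [IsSpanOf] <;> omega
  obtain ⟨w, ⟨qf, hqf, hw⟩, hlet, hmap⟩ := hm
  have hlen : (letters w).length = 2 * n := by simp [hlet]
  obtain ⟨p, p', hnp, hpp', hpath⟩ := hw.exists_cut n (by omega)
  set w' := w.take p ++ w.drop p'
  have hx : refMapping w' (.inl ()) = some (0, n) :=
    refMapping_take_append (congrFun hmap (.inl ())) (by simp only; omega) hnp _
  obtain ⟨e, hy⟩ :=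
    refMapping_take_append_fst (congrFun hmap (.inr ())) (s := (n, 2 * n)) hnp _
  have hmem : refMapping w' ∈ spanLenRule α (letters w') :=
    hA ▸ ⟨w', ⟨qf, hqf, hpath⟩, rfl, rfl⟩
  have hle : n - 0 ≤ e - n := le_of_mem_spanLenRule hmem hx hy
  have he : e ≤ (letters w').length := refMapping_snd_le hy
  have hshort : (letters w').length < 2 * n :=
    hlen ▸ length_letters_take_append_drop_lt hpp'
  omega

/-- If the alphabet contains at least one letter, the single-variable
span length domination rule is not expressible as a regular spanner. -/
theorem spanLenRule_not_regular {α : Type} [Fintype α] [DecidableEq α] (a : α) :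
    ¬ IsRegular (spanLenRule α) :=
  spanLenRule_not_regular_general a

end DocSpanners
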